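/- arXiv:2405.08791 — 7 statements merged into one kernel-verified Lean document; each statement's English description precedes it below -/
import Mathlib

section
/- Let d ≥ 2 be even and T_d := T_{1,d}. Then the image of T_d is exactly the half-plane {(x,y) ∈ ℝ² : x ≥ y}. Define, for x ≥ y, the maps T⁻¹_{±,d}(x,y) = (−2x + y ± (x−y)^{1/d}, 2x − y), where (x−y)^{1/d} denotes the nonnegative d-th root. Then T⁻¹_{+,d} is a bijection from {x ≥ y} onto {(x,y) : x ≥ −y} and T⁻¹_{−,d} is a bijection from {x ≥ y} onto {(x,y) : x ≤ −y}; moreover T_d(T⁻¹_{±,d}(x,y)) = (x,y) for all x ≥ y, T⁻¹_{+,d}(T_d(x,y)) = (x,y) whenever x ≥ −y, and T⁻¹_{−,d}(T_d(x,y)) = (x,y) whenever x ≤ −y. Finally, for every x₀ ∈ ℝ, T_d maps the line {(x, −x + x₀) : x ∈ ℝ} bijectively onto the line {(x, x − x₀^d) : x ∈ ℝ}. -/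
/-!
Writing `s = x + y`, the image `(u, v) = T_{a,d}(x, y)` satisfies `u - v = a s^d` and `2u - v = y`,
so a point is recovered from its image together with a choice of `d`-th root `s` of `(u - v)/a`.
For `a = 1` and even `d` this forces `u ≥ v`, and the two real roots `±(u - v)^{1/d}` give the
two inverse branches, distinguished by the sign of `x + y`. On a line `x + y = x₀` the value of
`s` is fixed, so `T_{a,d}` is an affine bijection there.
-/

/-- The model map `T_{a,d}(x,y) = (y − a(x+y)^d, y − 2a(x+y)^d)`. -/
noncomputable def Tmap (a : ℝ) (d : ℕ) (p : ℝ × ℝ) : ℝ × ℝ :=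
  (p.2 - a * (p.1 + p.2) ^ d, p.2 - 2 * a * (p.1 + p.2) ^ d)

/-- Inverse branch `T⁻¹_{+,d}` (nonnegative d-th root, via `rpow`). -/
noncomputable def TinvPlus (d : ℕ) (p : ℝ × ℝ) : ℝ × ℝ :=
  (-2 * p.1 + p.2 + (p.1 - p.2) ^ ((1 : ℝ) / d), 2 * p.1 - p.2)

/-- Inverse branch `T⁻¹_{−,d}` (nonnegative d-th root, via `rpow`). -/
noncomputable def TinvMinus (d : ℕ) (p : ℝ × ℝ) : ℝ × ℝ :=
  (-2 * p.1 + p.2 - (p.1 - p.2) ^ ((1 : ℝ) / d), 2 * p.1 - p.2)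

open Set

section

variable {a : ℝ} {d : ℕ}

theorem Tmap_eq_iff {p q : ℝ × ℝ} :
    Tmap a d p = q ↔ a * (p.1 + p.2) ^ d = q.1 - q.2 ∧ p.2 = 2 * q.1 - q.2 := by
  constructor
  · rintro rfl
    constructor <;> simp only [Tmap] <;> ring
  · rintro ⟨hs, hy⟩
    ext <;> simp only [Tmap] <;> linarith

theorem Tmap_fst_sub_snd (p : ℝ × ℝ) : (Tmap a d p).1 - (Tmap a d p).2 = a * (p.1 + p.2) ^ d :=
  ((Tmap_eq_iff.1 rfl).1).symm

theorem two_mul_Tmap_fst_sub_snd (p : ℝ × ℝ) : 2 * (Tmap a d p).1 - (Tmap a d p).2 = p.2 :=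
  ((Tmap_eq_iff.1 rfl).2).symm

theorem Tmap_snd_le_fst (ha : 0 ≤ a) (heven : Even d) (p : ℝ × ℝ) :
    (Tmap a d p).2 ≤ (Tmap a d p).1 := by
  have := Tmap_fst_sub_snd (a := a) (d := d) p
  nlinarith [heven.pow_nonneg (p.1 + p.2)]

theorem Tmap_bijOn_line (a : ℝ) (d : ℕ) (x₀ : ℝ) :
    BijOn (Tmap a d) {p : ℝ × ℝ | p.2 = -p.1 + x₀} {q : ℝ × ℝ | q.2 = q.1 - a * x₀ ^ d} := by
  have sum_eq {p : ℝ × ℝ} (hp : p.2 = -p.1 + x₀) : p.1 + p.2 = x₀ := by linarith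
  refine ⟨fun p hp => ?_, fun p hp q hq hpq => ?_, fun q hq => ?_⟩
  · have := Tmap_fst_sub_snd (a := a) (d := d) p
    rw [sum_eq hp] at this
    simp only [mem_ofPred_eq]
    linarith
  · have hy : p.2 = q.2 := by
      rw [← two_mul_Tmap_fst_sub_snd (a := a) (d := d) p, hpq, two_mul_Tmap_fst_sub_snd]
    have := sum_eq hp
    have := sum_eq hq
    exact Prod.ext (by linarith) hy
  · refine ⟨(x₀ - (2 * q.1 - q.2), 2 * q.1 - q.2), by simp, Tmap_eq_iff.2 ⟨?_, rfl⟩⟩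
    simp only [mem_ofPred_eq] at hq
    simp only [sub_add_cancel]
    linarith

end

section Inverses

variable {d : ℕ}

theorem TinvPlus_fst_add_snd (q : ℝ × ℝ) :
    (TinvPlus d q).1 + (TinvPlus d q).2 = (q.1 - q.2) ^ ((1 : ℝ) / d) := by
  simp only [TinvPlus]
  ring

theorem TinvMinus_fst_add_snd (q : ℝ × ℝ) :
    (TinvMinus d q).1 + (TinvMinus d q).2 = -(q.1 - q.2) ^ ((1 : ℝ) / d) := by
  simp only [TinvMinus]
  ring

theorem TinvPlus_mapsTo : MapsTo (TinvPlus d) {q | q.2 ≤ q.1} {p | -p.2 ≤ p.1} := by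
  intro q hq
  have := TinvPlus_fst_add_snd (d := d) q
  have := Real.rpow_nonneg (sub_nonneg.2 hq) ((1 : ℝ) / d)
  simp only [mem_ofPred_eq]
  linarith

theorem TinvMinus_mapsTo : MapsTo (TinvMinus d) {q | q.2 ≤ q.1} {p | p.1 ≤ -p.2} := by
  intro q hq
  have := TinvMinus_fst_add_snd (d := d) q
  have := Real.rpow_nonneg (sub_nonneg.2 hq) ((1 : ℝ) / d)
  simp only [mem_ofPred_eq]
  linarith

theorem Tmap_TinvPlus (hd : d ≠ 0) {q : ℝ × ℝ} (hq : q.2 ≤ q.1) :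
    Tmap 1 d (TinvPlus d q) = q := by
  rw [Tmap_eq_iff, one_mul, TinvPlus_fst_add_snd, one_div,
    Real.rpow_inv_natCast_pow (sub_nonneg.2 hq) hd]
  exact ⟨rfl, rfl⟩

theorem Tmap_TinvMinus (hd : d ≠ 0) (heven : Even d) {q : ℝ × ℝ} (hq : q.2 ≤ q.1) :
    Tmap 1 d (TinvMinus d q) = q := by
  rw [Tmap_eq_iff, one_mul, TinvMinus_fst_add_snd, heven.neg_pow, one_div,
    Real.rpow_inv_natCast_pow (sub_nonneg.2 hq) hd]
  exact ⟨rfl, rfl⟩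

theorem TinvPlus_Tmap (hd : d ≠ 0) {p : ℝ × ℝ} (hp : -p.2 ≤ p.1) :
    TinvPlus d (Tmap 1 d p) = p := by
  have hsum : (TinvPlus d (Tmap 1 d p)).1 + (TinvPlus d (Tmap 1 d p)).2 = p.1 + p.2 := by
    rw [TinvPlus_fst_add_snd, Tmap_fst_sub_snd, one_mul, one_div,
      Real.pow_rpow_inv_natCast (by linarith) hd]
  have hy : (TinvPlus d (Tmap 1 d p)).2 = p.2 := two_mul_Tmap_fst_sub_snd p
  exact Prod.ext (by linarith) hy

theorem TinvMinus_Tmap (hd : d ≠ 0) (heven : Even d) {p : ℝ × ℝ} (hp : p.1 ≤ -p.2) :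
    TinvMinus d (Tmap 1 d p) = p := by
  have hsum : (TinvMinus d (Tmap 1 d p)).1 + (TinvMinus d (Tmap 1 d p)).2 = p.1 + p.2 := by
    rw [TinvMinus_fst_add_snd, Tmap_fst_sub_snd, one_mul, ← heven.neg_pow, one_div,
      Real.pow_rpow_inv_natCast (by linarith) hd, neg_neg]
  have hy : (TinvMinus d (Tmap 1 d p)).2 = p.2 := two_mul_Tmap_fst_sub_snd p
  exact Prod.ext (by linarith) hy

end Inverses

/-- for even `d`, the image of `T_d` is `{x ≥ y}`, the two inverse
branches are bijections onto `{x ≥ −y}` and `{x ≤ −y}` respectively, and `T_d`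
maps each line `y = −x + x₀` bijectively onto the line `y = x − x₀^d`. -/
theorem stmt1 (d : ℕ) (hd : 2 ≤ d) (heven : Even d) :
    Set.range (Tmap 1 d) = {p : ℝ × ℝ | p.2 ≤ p.1} ∧
    Set.BijOn (TinvPlus d) {p : ℝ × ℝ | p.2 ≤ p.1} {p : ℝ × ℝ | -p.2 ≤ p.1} ∧
    Set.BijOn (TinvMinus d) {p : ℝ × ℝ | p.2 ≤ p.1} {p : ℝ × ℝ | p.1 ≤ -p.2} ∧
    (∀ p : ℝ × ℝ, p.2 ≤ p.1 →
      Tmap 1 d (TinvPlus d p) = p ∧ Tmap 1 d (TinvMinus d p) = p) ∧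
    (∀ p : ℝ × ℝ, -p.2 ≤ p.1 → TinvPlus d (Tmap 1 d p) = p) ∧
    (∀ p : ℝ × ℝ, p.1 ≤ -p.2 → TinvMinus d (Tmap 1 d p) = p) ∧
    (∀ x₀ : ℝ, Set.BijOn (Tmap 1 d)
      {p : ℝ × ℝ | p.2 = -p.1 + x₀} {p : ℝ × ℝ | p.2 = p.1 - x₀ ^ d}) := by
  have hd0 : d ≠ 0 := by omega
  have hTmap : MapsTo (Tmap 1 d) univ {q | q.2 ≤ q.1} :=
    fun p _ => Tmap_snd_le_fst zero_le_one heven p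
  refine ⟨?_, ?_, ?_, fun p hp => ⟨Tmap_TinvPlus hd0 hp, Tmap_TinvMinus hd0 heven hp⟩,
    fun p => TinvPlus_Tmap hd0, fun p => TinvMinus_Tmap hd0 heven, fun x₀ => ?_⟩
  · exact (range_subset_iff.2 fun p => hTmap (mem_univ p)).antisymm
      fun q hq => ⟨TinvPlus d q, Tmap_TinvPlus hd0 hq⟩
  · exact InvOn.bijOn ⟨fun q => Tmap_TinvPlus hd0, fun p => TinvPlus_Tmap hd0⟩
      TinvPlus_mapsTo (hTmap.mono_left (subset_univ _))
  · exact InvOn.bijOn ⟨fun q => Tmap_TinvMinus hd0 heven, fun p => TinvMinus_Tmap hd0 heven⟩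
      TinvMinus_mapsTo (hTmap.mono_left (subset_univ _))
  · simpa only [one_mul] using Tmap_bijOn_line 1 d x₀
end

section
/- Let d ≥ 3 be odd and T_d := T_{1,d}. Then T_d : ℝ² → ℝ² is a homeomorphism of ℝ² onto ℝ², with inverse T_d⁻¹(x,y) = (−2x + y + (x−y)^{1/d}, 2x − y), where t^{1/d} denotes the unique real d-th root of t. The inverse T_d⁻¹ is real analytic on ℝ² ∖ {x = y} and is not differentiable at any point of the diagonal {x = y}. Moreover, for every x₀ ∈ ℝ, T_d maps the line {(x, −x + x₀) : x ∈ ℝ} bijectively onto the line {(x, x − x₀^d) : x ∈ ℝ}. -/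
/-- The unique real d-th root of `t` (for odd `d`). -/
noncomputable def oddRoot (d : ℕ) (t : ℝ) : ℝ :=
  if 0 ≤ t then t ^ ((1 : ℝ) / d) else -((-t) ^ ((1 : ℝ) / d))

/-!
With `s = x + y`, the image `(u, v) = T_{a,d}(x, y)` satisfies `u - v = a s^d` and `2u - v = y`,
so for odd `d` the point is recovered by taking the real `d`-th root of `(u - v) / a`; this root is
analytic away from `0`. At the diagonal point `(x, x) = T_{a,d}(-x, x)` the map is stationary along
the horizontal curve `t ↦ (t - x, x)` (its image `(x - a t^d, x - 2a t^d)` has zero velocity for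
`d ≥ 2`), so by the chain rule a differentiable inverse would give that curve zero velocity too.
-/

open Function Set

section OddRoot

variable {d : ℕ}

theorem pow_oddRoot (hodd : Odd d) (t : ℝ) : oddRoot d t ^ d = t := by
  have hd : (d : ℝ) ≠ 0 := Nat.cast_ne_zero.mpr hodd.pos.ne'
  have rpow_inv_pow : ∀ s : ℝ, 0 ≤ s → (s ^ ((1 : ℝ) / d)) ^ d = s := fun s hs => by
    rw [← Real.rpow_natCast, ← Real.rpow_mul hs, one_div_mul_cancel hd, Real.rpow_one]
  rcases le_or_gt 0 t with ht | ht
  · rw [oddRoot, if_pos ht, rpow_inv_pow t ht]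
  · rw [oddRoot, if_neg ht.not_ge, hodd.neg_pow, rpow_inv_pow (-t) (by linarith), neg_neg]

theorem oddRoot_pow (hodd : Odd d) (t : ℝ) : oddRoot d (t ^ d) = t :=
  hodd.strictMono_pow.injective (pow_oddRoot hodd (t ^ d))

theorem continuous_oddRoot (hd : d ≠ 0) : Continuous (oddRoot d) := by
  have hroot : Continuous fun t : ℝ => t ^ ((1 : ℝ) / d) :=
    continuous_id.rpow_const fun _ => .inr (by positivity)
  refine Continuous.if_le hroot (hroot.comp continuous_neg).neg continuous_const continuous_id ?_
  rintro x rfl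
  simp [Real.zero_rpow (inv_ne_zero (Nat.cast_ne_zero.mpr hd))]

theorem analyticAt_oddRoot (d : ℕ) {t : ℝ} (ht : t ≠ 0) : AnalyticAt ℝ (oddRoot d) t := by
  have hroot : ∀ s : ℝ, s ≠ 0 → AnalyticAt ℝ (fun u : ℝ => u ^ ((1 : ℝ) / d)) s := fun s hs =>
    (Real.contDiffAt_rpow_const_of_ne hs).analyticAt
  rcases ht.lt_or_gt with hneg | hpos
  · refine ((hroot (-t) (neg_ne_zero.mpr ht)).comp analyticAt_id.neg).neg.congr ?_
    filter_upwards [eventually_lt_nhds hneg] with u hu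
    simp [oddRoot, hu.not_ge]
  · refine (hroot t ht).congr ?_
    filter_upwards [eventually_gt_nhds hpos] with u hu
    simp [oddRoot, hu.le]

end OddRoot

theorem not_differentiableAt_of_leftInverse_of_hasDerivAt_zero {𝕜 E F : Type*}
    [NontriviallyNormedField 𝕜] [NormedAddCommGroup E] [NormedSpace 𝕜 E]
    [NormedAddCommGroup F] [NormedSpace 𝕜 F] {f : E → F} {g : F → E} (hgf : LeftInverse g f)
    {γ : 𝕜 → E} {v : E} {t : 𝕜} (hγ : HasDerivAt γ v t) (hv : v ≠ 0)
    (hfγ : HasDerivAt (f ∘ γ) 0 t) : ¬ DifferentiableAt 𝕜 g (f (γ t)) := by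
  intro hg
  have hgfγ := hg.hasFDerivAt.comp_hasDerivAt t hfγ
  rw [map_zero, ← comp_assoc, hgf.comp_eq_id, id_comp] at hgfγ
  exact hv (hγ.unique hgfγ)

section Tmap

variable {a : ℝ} {d : ℕ}

noncomputable def tmapInv (a : ℝ) (d : ℕ) (p : ℝ × ℝ) : ℝ × ℝ :=
  (-2 * p.1 + p.2 + oddRoot d ((p.1 - p.2) / a), 2 * p.1 - p.2)

theorem tmapInv_tmap (ha : a ≠ 0) (hodd : Odd d) : LeftInverse (tmapInv a d) (Tmap a d) := by
  intro p
  have hdiff : (Tmap a d p).1 - (Tmap a d p).2 = a * (p.1 + p.2) ^ d := by simp only [Tmap]; ring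
  rw [tmapInv, hdiff, mul_div_cancel_left₀ _ ha, oddRoot_pow hodd]
  ext <;> simp only [Tmap] <;> ring

theorem tmap_tmapInv (ha : a ≠ 0) (hodd : Odd d) : RightInverse (tmapInv a d) (Tmap a d) := by
  intro p
  have hsum : (tmapInv a d p).1 + (tmapInv a d p).2 = oddRoot d ((p.1 - p.2) / a) := by
    simp only [tmapInv]; ring
  rw [Tmap, hsum, pow_oddRoot hodd]
  ext <;> simp only [tmapInv] <;> field_simp <;> ring

noncomputable def tmapHomeomorph (ha : a ≠ 0) (hodd : Odd d) : (ℝ × ℝ) ≃ₜ (ℝ × ℝ) where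
  toFun := Tmap a d
  invFun := tmapInv a d
  left_inv := tmapInv_tmap ha hodd
  right_inv := tmap_tmapInv ha hodd
  continuous_toFun := by unfold Tmap; fun_prop
  continuous_invFun := by
    have := continuous_oddRoot hodd.pos.ne'
    unfold tmapInv; fun_prop

theorem analyticAt_tmapInv (ha : a ≠ 0) {p : ℝ × ℝ} (hp : p.1 ≠ p.2) :
    AnalyticAt ℝ (tmapInv a d) p := by
  have hinner : AnalyticAt ℝ (fun q : ℝ × ℝ => (q.1 - q.2) / a) p :=
    (analyticAt_fst.fun_sub analyticAt_snd).div_const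
  have hroot : AnalyticAt ℝ (fun q : ℝ × ℝ => oddRoot d ((q.1 - q.2) / a)) p :=
    (analyticAt_oddRoot d (div_ne_zero (sub_ne_zero.mpr hp) ha)).comp
      (f := fun q : ℝ × ℝ => (q.1 - q.2) / a) hinner
  exact ((analyticAt_const.mul analyticAt_fst).add analyticAt_snd |>.add hroot).prod
    ((analyticAt_const.mul analyticAt_fst).sub analyticAt_snd)

theorem hasDerivAt_tmap_horizontal_zero (hd : 2 ≤ d) (x : ℝ) :
    HasDerivAt (fun t : ℝ => Tmap a d (t - x, x)) 0 0 := by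
  have hpow : HasDerivAt (fun t : ℝ => t ^ d) 0 0 := by
    simpa [zero_pow (by omega : d - 1 ≠ 0)] using hasDerivAt_pow d (0 : ℝ)
  have hcomp := ((hpow.const_mul a).const_sub x).prodMk ((hpow.const_mul (2 * a)).const_sub x)
  simp only [mul_zero, neg_zero, Prod.mk_zero_zero] at hcomp
  convert hcomp using 1
  ext t <;> simp [Tmap, mul_assoc]

theorem not_differentiableAt_tmapInv (ha : a ≠ 0) (hodd : Odd d) (hd : 2 ≤ d) (x : ℝ) :
    ¬ DifferentiableAt ℝ (tmapInv a d) (x, x) := by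
  have hγ : HasDerivAt (fun t : ℝ => (t - x, x)) (1, 0) 0 :=
    ((hasDerivAt_id 0).sub_const x).prodMk (hasDerivAt_const 0 x)
  have h := not_differentiableAt_of_leftInverse_of_hasDerivAt_zero (tmapInv_tmap ha hodd) hγ
    (by simp) (hasDerivAt_tmap_horizontal_zero hd x)
  simpa [Tmap, zero_pow (by omega : d ≠ 0)] using h

theorem bijOn_tmap_line (ha : a ≠ 0) (hodd : Odd d) (x₀ : ℝ) :
    BijOn (Tmap a d) {p : ℝ × ℝ | p.2 = -p.1 + x₀} {p : ℝ × ℝ | p.2 = p.1 - a * x₀ ^ d} := by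
  refine (tmapHomeomorph ha hodd).toEquiv.bijOn' ?_ ?_
  · rintro p (hp : p.2 = -p.1 + x₀)
    have hsum : p.1 + p.2 = x₀ := by linarith
    show (Tmap a d p).2 = (Tmap a d p).1 - a * x₀ ^ d
    simp only [Tmap, hsum]
    ring
  · rintro q (hq : q.2 = q.1 - a * x₀ ^ d)
    have hdiff : (q.1 - q.2) / a = x₀ ^ d := by rw [hq]; field_simp; ring
    show (tmapInv a d q).2 = -(tmapInv a d q).1 + x₀
    simp only [tmapInv, hdiff, oddRoot_pow hodd]
    ring

end Tmap

/-- for odd `d ≥ 3`, `T_d` is a homeomorphism of `ℝ²` with the given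
inverse, the inverse is real analytic off the diagonal, not differentiable on the
diagonal, and `T_d` maps each line `y = −x + x₀` bijectively onto `y = x − x₀^d`. -/
theorem stmt2 (d : ℕ) (hd : 3 ≤ d) (hodd : Odd d) :
    ∃ h : (ℝ × ℝ) ≃ₜ (ℝ × ℝ),
      (⇑h = Tmap 1 d) ∧
      (∀ p : ℝ × ℝ,
        h.symm p = (-2 * p.1 + p.2 + oddRoot d (p.1 - p.2), 2 * p.1 - p.2)) ∧
      (∀ p : ℝ × ℝ, p.1 ≠ p.2 → AnalyticAt ℝ (⇑h.symm) p) ∧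
      (∀ x : ℝ, ¬ DifferentiableAt ℝ (⇑h.symm) (x, x)) ∧
      (∀ x₀ : ℝ, Set.BijOn (Tmap 1 d)
        {p : ℝ × ℝ | p.2 = -p.1 + x₀} {p : ℝ × ℝ | p.2 = p.1 - x₀ ^ d}) := by
  refine ⟨tmapHomeomorph one_ne_zero hodd, rfl, fun p => by simp [tmapHomeomorph, tmapInv],
    fun p hp => analyticAt_tmapInv one_ne_zero hp,
    not_differentiableAt_tmapInv one_ne_zero hodd (by omega), fun x₀ => ?_⟩
  simpa using bijOn_tmap_line one_ne_zero hodd x₀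
end

section
/- Let d ≥ 2 be an integer and let φ(x) = Σ_{n≥2} α_n xⁿ be a formal power series over ℝ with vanishing constant and linear coefficients that satisfies, as an identity of formal power series, the invariance equation φ(x) − 2(x + φ(x))^d = φ( φ(x) − (x + φ(x))^d ). Then α_n = 0 for every n that is not of the form d + k(d−1) with k ≥ 0 an integer; moreover α_d = 2 and α_{2d−1} = 4d. -/
/-!
Comparing the coefficients of `xⁿ` in the invariance equation expresses `αₙ` through the `αₘ`
with `m < n`, and every product that occurs has index `≡ 1 (mod d - 1)` once the lower
coefficients are supported on that residue class; by induction so is the support of `φ`, and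
`α₀ = α₁ = 0` leaves only the indices `d + k(d - 1)`. Then `φ = α_d xᵈ + O(x^(2d-1))`, so the
composition term is `O(x^(2d))` and below `x^(2d)` the equation reads
`φ = 2 (x + φ)ᵈ = 2 xᵈ + 2 d α_d x^(2d-1) + O(x^(2d))`.
-/

open PowerSeries

/-- Composition `f ∘ g` of formal power series (intended for `g` with zero
constant coefficient, in which case `coeff n (g ^ k) = 0` for `k > n` and the
finite sum below gives the usual substitution of `g` into `f`). -/
noncomputable def psComp (f g : PowerSeries ℝ) : PowerSeries ℝ :=
  PowerSeries.mk fun n =>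
    ∑ k ∈ Finset.range (n + 1), PowerSeries.coeff k f * PowerSeries.coeff n (g ^ k)

open Finset

theorem pow_dvd_pow_sub_pow_of_dvd_sub {R : Type*} [CommRing R] {x a b : R} {n k : ℕ}
    (ha : x ∣ a) (hb : x ∣ b) (hab : x ^ n ∣ a - b) : x ^ (n + (k - 1)) ∣ a ^ k - b ^ k := by
  rw [← geom_sum₂_mul, add_comm n, pow_add]
  refine mul_dvd_mul (dvd_sum fun i hi => ?_) hab
  have hi : i + (k - 1 - i) = k - 1 := by rw [mem_range] at hi; omega
  calc x ^ (k - 1) = x ^ i * x ^ (k - 1 - i) := by rw [← pow_add, hi]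
    _ ∣ a ^ i * b ^ (k - 1 - i) := mul_dvd_mul (pow_dvd_pow_of_dvd ha i) (pow_dvd_pow_of_dvd hb _)

namespace PowerSeries

variable {R : Type*}

theorem coeff_eq_coeff_of_X_pow_dvd_sub [Ring R] {f g : R⟦X⟧} {N n : ℕ}
    (h : X ^ N ∣ f - g) (hn : n < N) : coeff n f = coeff n g := by
  rw [← sub_eq_zero, ← map_sub]
  exact X_pow_dvd_iff.mp h n hn

theorem coeff_pow_eq_zero_of_X_pow_dvd [CommSemiring R] {f : R⟦X⟧} {j k n : ℕ}
    (hf : X ^ j ∣ f) (hn : n < j * k) : coeff n (f ^ k) = 0 := by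
  refine X_pow_dvd_iff.mp ?_ n hn
  rw [pow_mul]
  exact pow_dvd_pow_of_dvd hf k

def ModEqSupportedBelow [Semiring R] (D c N : ℕ) (f : R⟦X⟧) : Prop :=
  ∀ m < N, coeff m f ≠ 0 → m ≡ c [MOD D]

namespace ModEqSupportedBelow

variable {D c c' N : ℕ} {f g : R⟦X⟧}

theorem mono [Semiring R] {N' : ℕ} (hf : ModEqSupportedBelow D c N f) (hN : N' ≤ N)
    (hc : c ≡ c' [MOD D]) : ModEqSupportedBelow D c' N' f :=
  fun m hm hne => (hf m (hm.trans_le hN) hne).trans hc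

theorem _root_.PowerSeries.modEqSupportedBelow_X [Semiring R] :
    ModEqSupportedBelow D 1 N (X : R⟦X⟧) := by
  intro m _ hm
  obtain rfl : m = 1 := by by_contra h; simp [coeff_X, h] at hm
  rfl

theorem _root_.PowerSeries.modEqSupportedBelow_one [Semiring R] :
    ModEqSupportedBelow D 0 N (1 : R⟦X⟧) := by
  intro m _ hm
  obtain rfl : m = 0 := by by_contra h; simp [coeff_one, h] at hm
  rfl

theorem add [Semiring R] (hf : ModEqSupportedBelow D c N f)
    (hg : ModEqSupportedBelow D c N g) : ModEqSupportedBelow D c N (f + g) := by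
  intro m hm hne
  rw [map_add] at hne
  by_cases hfm : coeff m f = 0
  · exact hg m hm (by simpa [hfm] using hne)
  · exact hf m hm hfm

theorem sub [Ring R] (hf : ModEqSupportedBelow D c N f)
    (hg : ModEqSupportedBelow D c N g) : ModEqSupportedBelow D c N (f - g) := by
  intro m hm hne
  rw [map_sub] at hne
  by_cases hfm : coeff m f = 0
  · exact hg m hm (by simpa [hfm] using hne)
  · exact hf m hm hfm

theorem mul [Semiring R] (hf : ModEqSupportedBelow D c N f)
    (hg : ModEqSupportedBelow D c' N g) : ModEqSupportedBelow D (c + c') N (f * g) := by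
  intro m hm hne
  obtain ⟨⟨i, j⟩, hij, hterm⟩ := exists_ne_zero_of_sum_ne_zero (coeff_mul m f g ▸ hne)
  rw [HasAntidiagonal.mem_antidiagonal] at hij
  subst hij
  exact (hf i (by omega) (left_ne_zero_of_mul hterm)).add
    (hg j (by omega) (right_ne_zero_of_mul hterm))

/-- Without constant terms, the coefficient of index `N` of a product only involves
coefficients of index below `N` of the factors. -/
theorem mul_of_coeff_zero [Semiring R] (hf : ModEqSupportedBelow D c N f)
    (hg : ModEqSupportedBelow D c' N g) (hf0 : coeff 0 f = 0) (hg0 : coeff 0 g = 0) :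
    ModEqSupportedBelow D (c + c') (N + 1) (f * g) := by
  intro m hm hne
  obtain ⟨⟨i, j⟩, hij, hterm⟩ := exists_ne_zero_of_sum_ne_zero (coeff_mul m f g ▸ hne)
  rw [HasAntidiagonal.mem_antidiagonal] at hij
  subst hij
  have hi : i ≠ 0 := by rintro rfl; simp [hf0] at hterm
  have hj : j ≠ 0 := by rintro rfl; simp [hg0] at hterm
  exact (hf i (by omega) (left_ne_zero_of_mul hterm)).add
    (hg j (by omega) (right_ne_zero_of_mul hterm))

theorem pow [Semiring R] (hf : ModEqSupportedBelow D c N f) (k : ℕ) :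
    ModEqSupportedBelow D (k * c) N (f ^ k) := by
  induction k with
  | zero => simpa using (modEqSupportedBelow_one : ModEqSupportedBelow D 0 N (1 : R⟦X⟧))
  | succ k ih => simpa [pow_succ, Nat.succ_mul] using ih.mul hf

theorem pow_of_coeff_zero [CommSemiring R] (hf : ModEqSupportedBelow D c N f)
    (hf0 : coeff 0 f = 0) {k : ℕ} (hk : 2 ≤ k) :
    ModEqSupportedBelow D (k * c) (N + 1) (f ^ k) := by
  obtain ⟨k, rfl⟩ := Nat.exists_eq_add_of_le' hk
  have hpow0 : coeff 0 (f ^ (k + 1)) = 0 := by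
    rw [coeff_zero_eq_constantCoeff_apply, map_pow, ← coeff_zero_eq_constantCoeff_apply, hf0,
      zero_pow k.succ_ne_zero]
  simpa [pow_succ _ (k + 1), Nat.succ_mul] using (hf.pow (k + 1)).mul_of_coeff_zero hf hpow0 hf0

end ModEqSupportedBelow

end PowerSeries

theorem Nat.exists_eq_add_mul_of_modEq {d n : ℕ} (hn : 2 ≤ n) (h : n ≡ 1 [MOD d - 1]) :
    ∃ k, n = d + k * (d - 1) := by
  obtain ⟨j, hj⟩ := (Nat.modEq_iff_dvd' (by omega)).mp h.symm
  obtain ⟨k, rfl⟩ : ∃ k, j = k + 1 := Nat.exists_eq_succ_of_ne_zero (by rintro rfl; omega)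
  have hd : d ≠ 0 := by rintro rfl; simp at hj; omega
  refine ⟨k, ?_⟩
  rw [mul_add, mul_one, mul_comm] at hj
  omega

theorem PowerSeries.X_pow_dvd_add_pow_sub {R : Type*} [CommRing R] {φ : R⟦X⟧} {a : R} {d : ℕ}
    (hd : 2 ≤ d) (h : X ^ (2 * d - 1) ∣ φ - C a * X ^ d) :
    X ^ (2 * d) ∣ (X + φ) ^ d - (X ^ d + C (d * a) * X ^ (2 * d - 1)) := by
  have hX : (X : R⟦X⟧) ∣ X + C a * X ^ d :=
    dvd_add dvd_rfl (dvd_mul_of_dvd_right (dvd_pow_self X (by omega)) _)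
  have hφ : X ^ (2 * d) ∣ (X + φ) ^ d - (X + C a * X ^ d) ^ d := by
    have hsub : X + φ - (X + C a * X ^ d) = φ - C a * X ^ d := by ring
    refine (pow_dvd_pow X (show 2 * d ≤ 2 * d - 1 + (d - 1) by omega)).trans
      (pow_dvd_pow_sub_pow_of_dvd_sub (k := d) ?_ hX (hsub ▸ h))
    simpa using dvd_add hX ((dvd_pow_self X (by omega)).trans h)
  have hbinom : X ^ (2 * d) ∣
      (X + C a * X ^ d) ^ d - X ^ (d - 1) * (C a * X ^ d) * (d : R⟦X⟧) - X ^ d :=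
    dvd_trans ⟨C a ^ 2, by ring⟩ (sq_dvd_add_pow_sub_sub (C a * X ^ d) X d)
  have hlin : X ^ (d - 1) * (C a * X ^ d) * (d : R⟦X⟧) = C (d * a) * X ^ (2 * d - 1) := by
    rw [show 2 * d - 1 = d - 1 + d by omega, pow_add, map_mul, map_natCast]
    ring
  convert dvd_add hφ hbinom using 1
  rw [hlin]
  ring

theorem PowerSeries.X_pow_dvd_sub_C_mul_X_pow {R : Type*} [Ring R] {φ : R⟦X⟧} {d : ℕ}
    (hsupp : ∀ n, coeff n φ ≠ 0 → ∃ k, n = d + k * (d - 1)) :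
    X ^ (2 * d - 1) ∣ φ - C (coeff d φ) * X ^ d := by
  refine X_pow_dvd_iff.mpr fun m hm => ?_
  rw [map_sub, coeff_C_mul_X_pow]
  split_ifs with hmd
  · rw [hmd, sub_self]
  · rw [sub_zero]
    by_contra hne
    obtain ⟨_ | k, rfl⟩ := hsupp m hne
    · simp at hmd
    · have := Nat.le_mul_of_pos_left (d - 1) (by omega : 0 < k + 1)
      omega

theorem coeff_psComp_eq_zero_of_X_pow_dvd {f g : ℝ⟦X⟧} (h0 : coeff 0 f = 0)
    (h1 : coeff 1 f = 0) {j n : ℕ} (hg : X ^ j ∣ g) (hn : n < 2 * j) :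
    coeff n (psComp f g) = 0 := by
  rw [psComp, coeff_mk]
  refine sum_eq_zero fun k _ => ?_
  obtain _ | _ | k := k
  · rw [h0, zero_mul]
  · rw [h1, zero_mul]
  · rw [coeff_pow_eq_zero_of_X_pow_dvd hg (by nlinarith), mul_zero]

theorem PowerSeries.ModEqSupportedBelow.coeff_psComp {f g : ℝ⟦X⟧} {D N : ℕ}
    (h0 : coeff 0 f = 0) (h1 : coeff 1 f = 0) (hf : ModEqSupportedBelow D 1 N f)
    (hg : ModEqSupportedBelow D 1 N g) (hg2 : X ^ 2 ∣ g) (hN : ¬N ≡ 1 [MOD D]) :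
    coeff N (psComp f g) = 0 := by
  rw [psComp, coeff_mk]
  refine sum_eq_zero fun k _ => ?_
  by_cases hfk : coeff k f = 0
  · rw [hfk, zero_mul]
  have hk : 2 ≤ k := by
    by_contra hk
    interval_cases k <;> contradiction
  by_cases hgk : coeff N (g ^ k) = 0
  · rw [hgk, mul_zero]
  have hkN : k < N := by
    by_contra hkN
    exact hgk (coeff_pow_eq_zero_of_X_pow_dvd hg2 (by omega))
  have hg0 : coeff 0 g = 0 := X_pow_dvd_iff.mp hg2 0 two_pos
  have hNk := (hg.pow_of_coeff_zero hg0 hk) N N.lt_succ_self hgk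
  exact absurd (hNk.trans (by simpa using hf k hkN hfk)) hN

def IsInvariantGraph (d : ℕ) (φ : ℝ⟦X⟧) : Prop :=
  φ - 2 * (X + φ) ^ d = psComp φ (φ - (X + φ) ^ d)

namespace IsInvariantGraph

variable {d : ℕ} {φ : ℝ⟦X⟧}

theorem coeff_sub_two_mul (hinv : IsInvariantGraph d φ) (n : ℕ) :
    coeff n φ - 2 * coeff n ((X + φ) ^ d) = coeff n (psComp φ (φ - (X + φ) ^ d)) := by
  have h := congrArg (coeff n) hinv
  rwa [map_sub, two_mul, map_add, ← two_mul] at h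

theorem modEqSupportedBelow (hinv : IsInvariantGraph d φ) (hd : 2 ≤ d) (h0 : coeff 0 φ = 0)
    (h1 : coeff 1 φ = 0) (N : ℕ) : ModEqSupportedBelow (d - 1) 1 N φ := by
  have hφ2 : X ^ 2 ∣ φ := X_pow_dvd_iff.mpr fun m hm => by interval_cases m <;> assumption
  have hX : X ∣ X + φ := dvd_add dvd_rfl ((dvd_pow_self X two_ne_zero).trans hφ2)
  have hg2 : X ^ 2 ∣ φ - (X + φ) ^ d :=
    dvd_sub hφ2 ((pow_dvd_pow X hd).trans (pow_dvd_pow_of_dvd hX d))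
  have hd1 : d * 1 ≡ 1 [MOD d - 1] := (Nat.modEq_iff_dvd' (by omega)).mpr ⟨1, by omega⟩ |>.symm
  induction N with
  | zero => exact fun m hm => absurd hm m.not_lt_zero
  | succ N ih =>
    intro m hm hne
    obtain hm | rfl := Nat.lt_succ_iff_lt_or_eq.mp hm
    · exact ih m hm hne
    by_contra hmod
    have hpow : ModEqSupportedBelow (d - 1) 1 (m + 1) ((X + φ) ^ d) :=
      ((modEqSupportedBelow_X.add ih).pow_of_coeff_zero
        (by rw [map_add, coeff_zero_X, h0, add_zero]) hd).mono le_rfl hd1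
    have hpow0 : coeff m ((X + φ) ^ d) = 0 := not_not.mp (mt (hpow m m.lt_succ_self) hmod)
    have hcomp := ModEqSupportedBelow.coeff_psComp h0 h1 ih
      (ih.sub (hpow.mono m.le_succ (Nat.ModEq.refl 1))) hg2 hmod
    have h := hinv.coeff_sub_two_mul m
    rw [hpow0, hcomp] at h
    exact hne (by linarith)

theorem exists_eq_add_mul_of_coeff_ne_zero (hinv : IsInvariantGraph d φ) (hd : 2 ≤ d)
    (h0 : coeff 0 φ = 0) (h1 : coeff 1 φ = 0) {n : ℕ} (hn : coeff n φ ≠ 0) :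
    ∃ k, n = d + k * (d - 1) := by
  have hn2 : 2 ≤ n := by
    by_contra hn2
    interval_cases n <;> contradiction
  exact Nat.exists_eq_add_mul_of_modEq hn2
    (hinv.modEqSupportedBelow hd h0 h1 (n + 1) n n.lt_succ_self hn)

theorem coeff_eq_two_mul_coeff_add_pow (hinv : IsInvariantGraph d φ) (h0 : coeff 0 φ = 0)
    (h1 : coeff 1 φ = 0) (hφ : X ^ d ∣ φ) {n : ℕ} (hn : n < 2 * d) :
    coeff n φ = 2 * coeff n ((X + φ) ^ d) := by
  have hX : X ∣ X + φ := dvd_add dvd_rfl ((dvd_pow_self X (by omega)).trans hφ)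
  have h := hinv.coeff_sub_two_mul n
  rw [coeff_psComp_eq_zero_of_X_pow_dvd h0 h1 (dvd_sub hφ (pow_dvd_pow_of_dvd hX d)) hn] at h
  linarith

end IsInvariantGraph

/-- structure of the Taylor coefficients of the stable manifold. -/
theorem stmt3 (d : ℕ) (hd : 2 ≤ d) (φ : PowerSeries ℝ)
    (h0 : PowerSeries.coeff 0 φ = 0) (h1 : PowerSeries.coeff 1 φ = 0)
    (hinv : φ - 2 * (PowerSeries.X + φ) ^ d =
      psComp φ (φ - (PowerSeries.X + φ) ^ d)) :
    (∀ n : ℕ, (¬ ∃ k : ℕ, n = d + k * (d - 1)) → PowerSeries.coeff n φ = 0) ∧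
    PowerSeries.coeff d φ = 2 ∧
    PowerSeries.coeff (2 * d - 1) φ = 4 * d := by
  have hinv : IsInvariantGraph d φ := hinv
  have hsupp n := hinv.exists_eq_add_mul_of_coeff_ne_zero hd h0 h1 (n := n)
  have hlow := X_pow_dvd_sub_C_mul_X_pow hsupp
  have hφ : X ^ d ∣ φ := by
    simpa using
      dvd_add ((pow_dvd_pow X (by omega)).trans hlow) (dvd_mul_left (X ^ d) (C (coeff d φ)))
  have hcoeff : ∀ n < 2 * d,
      coeff n φ = 2 * coeff n (X ^ d + C (d * coeff d φ) * X ^ (2 * d - 1)) := fun n hn => by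
    rw [hinv.coeff_eq_two_mul_coeff_add_pow h0 h1 hφ hn,
      coeff_eq_coeff_of_X_pow_dvd_sub (X_pow_dvd_add_pow_sub hd hlow) hn]
  have hcd : coeff d φ = 2 := by
    have h := hcoeff d (by omega)
    rwa [map_add, coeff_X_pow_self, coeff_C_mul_X_pow, if_neg (by omega), add_zero, mul_one] at h
  refine ⟨fun n hn => by_contra fun h => hn (hsupp n h), hcd, ?_⟩
  rw [hcoeff _ (by omega), map_add, coeff_X_pow, if_neg (by omega), coeff_C_mul_X_pow, if_pos rfl,
    hcd]
  ring
end

section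
/- Let d ≥ 2 be even, T_d := T_{1,d}, and for (x₀,y₀) ∈ ℝ² write (x_k, y_k) = T_d^k(x₀,y₀). Then for every k ≥ 1 one has y_k ≤ x_k; moreover x_{k+1} ≤ y_k ≤ x_k for all k ≥ 1 and y_{k+1} ≤ y_k for all k ≥ 0, so the sequences {x_k}_{k≥1} and {y_k}_{k≥1} are monotonically decreasing. Furthermore, for k ≥ 1, if x_k > −y_k then x_{k+1} < x_k and y_{k+1} < y_k. -/
/-!
Writing `s = a (x + y)^d`, one step of `T_{a,d}` is `(x, y) ↦ (y - s, y - 2s)`. For `a ≥ 0` and `d` even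
`s ≥ 0`, so the new point satisfies `y' ≤ x' ≤ y`, and `y' ≤ y`; all these inequalities are strict
when `a > 0` and `x + y > 0`.
-/

namespace Tmap

variable {a : ℝ} {d : ℕ}

lemma fst_le_snd (ha : 0 ≤ a) (hd : Even d) (q : ℝ × ℝ) : (Tmap a d q).1 ≤ q.2 := by
  have := mul_nonneg ha (hd.pow_nonneg (q.1 + q.2))
  simp only [Tmap]
  linarith

lemma snd_le_fst (ha : 0 ≤ a) (hd : Even d) (q : ℝ × ℝ) : (Tmap a d q).2 ≤ (Tmap a d q).1 := by
  have := mul_nonneg ha (hd.pow_nonneg (q.1 + q.2))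
  simp only [Tmap]
  linarith

lemma snd_le_snd (ha : 0 ≤ a) (hd : Even d) (q : ℝ × ℝ) : (Tmap a d q).2 ≤ q.2 :=
  (snd_le_fst ha hd q).trans (fst_le_snd ha hd q)

lemma fst_lt_snd (ha : 0 < a) {q : ℝ × ℝ} (hq : 0 < q.1 + q.2) : (Tmap a d q).1 < q.2 := by
  have := mul_pos ha (pow_pos hq d)
  simp only [Tmap]
  linarith

lemma snd_lt_snd (ha : 0 < a) {q : ℝ × ℝ} (hq : 0 < q.1 + q.2) : (Tmap a d q).2 < q.2 := by
  have := mul_pos ha (pow_pos hq d)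
  simp only [Tmap]
  linarith

lemma iterate_snd_le_fst (ha : 0 ≤ a) (hd : Even d) (p : ℝ × ℝ) {k : ℕ} (hk : 1 ≤ k) :
    ((Tmap a d)^[k] p).2 ≤ ((Tmap a d)^[k] p).1 := by
  obtain ⟨m, rfl⟩ := Nat.exists_eq_add_of_le' hk
  rw [Function.iterate_succ_apply']
  exact snd_le_fst ha hd _

end Tmap

open Tmap Function in
theorem stmt6_general (d : ℕ) (heven : Even d) (p : ℝ × ℝ) :
    (∀ k : ℕ, 1 ≤ k → ((Tmap 1 d)^[k] p).2 ≤ ((Tmap 1 d)^[k] p).1) ∧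
    (∀ k : ℕ, 1 ≤ k →
      ((Tmap 1 d)^[k + 1] p).1 ≤ ((Tmap 1 d)^[k] p).2 ∧
      ((Tmap 1 d)^[k] p).2 ≤ ((Tmap 1 d)^[k] p).1) ∧
    (∀ k : ℕ, ((Tmap 1 d)^[k + 1] p).2 ≤ ((Tmap 1 d)^[k] p).2) ∧
    (∀ k : ℕ, 1 ≤ k → -((Tmap 1 d)^[k] p).2 < ((Tmap 1 d)^[k] p).1 →
      ((Tmap 1 d)^[k + 1] p).1 < ((Tmap 1 d)^[k] p).1 ∧
      ((Tmap 1 d)^[k + 1] p).2 < ((Tmap 1 d)^[k] p).2) := by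
  have below_diag := fun k (hk : 1 ≤ k) ↦ iterate_snd_le_fst zero_le_one heven p hk
  refine ⟨below_diag, fun k hk ↦ ⟨?_, below_diag k hk⟩, fun k ↦ ?_,
    fun k hk hpos ↦ ⟨?_, ?_⟩⟩ <;> rw [iterate_succ_apply']
  · exact fst_le_snd zero_le_one heven _
  · exact snd_le_snd zero_le_one heven _
  · exact (fst_lt_snd one_pos (neg_lt_iff_pos_add.mp hpos)).trans_le (below_diag k hk)
  · exact snd_lt_snd one_pos (neg_lt_iff_pos_add.mp hpos)

/-- monotonicity of the orbit coordinates for even `d`. -/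
theorem stmt6 (d : ℕ) (hd : 2 ≤ d) (heven : Even d) (p : ℝ × ℝ) :
    (∀ k : ℕ, 1 ≤ k → ((Tmap 1 d)^[k] p).2 ≤ ((Tmap 1 d)^[k] p).1) ∧
    (∀ k : ℕ, 1 ≤ k →
      ((Tmap 1 d)^[k + 1] p).1 ≤ ((Tmap 1 d)^[k] p).2 ∧
      ((Tmap 1 d)^[k] p).2 ≤ ((Tmap 1 d)^[k] p).1) ∧
    (∀ k : ℕ, ((Tmap 1 d)^[k + 1] p).2 ≤ ((Tmap 1 d)^[k] p).2) ∧
    (∀ k : ℕ, 1 ≤ k → -((Tmap 1 d)^[k] p).2 < ((Tmap 1 d)^[k] p).1 →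
      ((Tmap 1 d)^[k + 1] p).1 < ((Tmap 1 d)^[k] p).1 ∧
      ((Tmap 1 d)^[k + 1] p).2 < ((Tmap 1 d)^[k] p).2) :=
  stmt6_general d heven p
end

section
/- Let d ≥ 2 be even, T_d := T_{1,d}, and set R_d = (1 − 1/d)·(2d)^{−1/(d−1)}. Then the basin of attraction 𝒜_d(0) of the origin satisfies 𝒜_d(0) ⊆ (−5R_d, R_d) × (0, 2R_d) ∪ {(0,0)}; in particular, 𝒜_d(0) is a bounded set. -/
/-- The basin of attraction of the origin for `T_{a,d}`. -/
noncomputable def basin (a : ℝ) (d : ℕ) : Set (ℝ × ℝ) :=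
  {p : ℝ × ℝ | Filter.Tendsto (fun n => (Tmap a d)^[n] p) Filter.atTop (nhds (0, 0))}

/-- The constant `R_d = (1 − 1/d)·(2d)^{−1/(d−1)}`. -/
noncomputable def Rd (d : ℕ) : ℝ :=
  (1 - 1 / (d : ℝ)) * ((2 * d : ℝ)) ^ (-(1 : ℝ) / ((d : ℝ) - 1))

/-!
The second coordinate decreases along orbits when `d` is even, so on the basin it stays
nonnegative. For a nonzero point `p = (x, y)` write `s = x + y`, `T p = (x₁, y₁)` and
`t = x₁ + y₁ = 2y − 3sᵈ`; then `y = 2t − 3y₁` and `sᵈ = t − 2y₁`. Combining `y₁ > 0`,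
`y₂ = y₁ − 2tᵈ ≥ 0` and the bound `v − 2vᵈ ≤ R_d` (whose maximum is attained at
`v = (2d)^{-1/(d-1)}`) applied to `v = s` and `v = t` gives `x < R_d`, `y < 2R_d` and
`sᵈ ≤ R_d ≤ (3R_d)ᵈ`, whence `x = s − y > −3R_d − 2R_d`.
-/

open Set

section Dynamics

variable {a : ℝ} {d : ℕ}

lemma snd_Tmap (p : ℝ × ℝ) : (Tmap a d p).2 = p.2 - 2 * a * (p.1 + p.2) ^ d := rfl

lemma Tmap_fst_add_snd (p : ℝ × ℝ) :
    (Tmap a d p).1 + (Tmap a d p).2 = 2 * p.2 - 3 * a * (p.1 + p.2) ^ d := by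
  simp only [Tmap]
  ring

lemma antitone_snd_iterate_Tmap (ha : 0 ≤ a) (heven : Even d) (p : ℝ × ℝ) :
    Antitone fun n => ((Tmap a d)^[n] p).2 := by
  refine antitone_nat_of_succ_le fun n => ?_
  rw [Function.iterate_succ_apply']
  have := heven.pow_nonneg (((Tmap a d)^[n] p).1 + ((Tmap a d)^[n] p).2)
  simp only [Tmap]
  nlinarith

lemma snd_iterate_nonneg_of_mem_basin (ha : 0 ≤ a) (heven : Even d) {p : ℝ × ℝ}
    (hp : p ∈ basin a d) (n : ℕ) : 0 ≤ ((Tmap a d)^[n] p).2 :=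
  (antitone_snd_iterate_Tmap ha heven p).le_of_tendsto ((continuous_snd.tendsto _).comp hp) n

end Dynamics

section Constant

variable {d : ℕ}

/-- The maximiser of `v ↦ v − 2vᵈ`; the maximum value is `Rd d`. -/
noncomputable def critPoint (d : ℕ) : ℝ :=
  (2 * d : ℝ) ^ (-(1 : ℝ) / ((d : ℝ) - 1))

lemma Rd_eq_mul_critPoint (d : ℕ) : Rd d = (1 - 1 / (d : ℝ)) * critPoint d := rfl

lemma critPoint_pos (hd : 2 ≤ d) : 0 < critPoint d :=
  Real.rpow_pos_of_pos (by positivity) _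

lemma critPoint_pow_pred (hd : 2 ≤ d) : critPoint d ^ (d - 1) = (2 * d : ℝ)⁻¹ := by
  have hd' : (2 : ℝ) ≤ d := by exact_mod_cast hd
  rw [critPoint, ← Real.rpow_natCast, ← Real.rpow_mul (by positivity),
    Nat.cast_pred (by omega), div_mul_cancel₀ _ (by linarith), Real.rpow_neg_one]

lemma Rd_pos (hd : 2 ≤ d) : 0 < Rd d := by
  have hd' : (2 : ℝ) ≤ d := by exact_mod_cast hd
  have : 1 / (d : ℝ) < 1 := by rw [div_lt_one] <;> linarith
  exact mul_pos (by linarith) (critPoint_pos hd)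

/-- By Bernoulli, `vᵈ` lies above its tangent line at `critPoint d`, whose slope is `1/2`. -/
lemma sub_two_mul_pow_le_Rd (hd : 2 ≤ d) (heven : Even d) (v : ℝ) : v - 2 * v ^ d ≤ Rd d := by
  have hR := Rd_pos hd
  rcases lt_or_ge v 0 with hv | hv
  · linarith [heven.pow_nonneg v]
  set c := critPoint d
  have hc : 0 < c := critPoint_pos hd
  have hd0 : (0 : ℝ) < d := by exact_mod_cast (by omega : 0 < d)
  have hcd : c ^ d = c * (2 * d : ℝ)⁻¹ := by
    rw [← critPoint_pow_pred hd, ← pow_succ', Nat.sub_add_cancel (by omega)]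
  have hbern : 1 + d * (v / c - 1) ≤ (v / c) ^ d := by
    simpa using one_add_mul_le_pow (a := v / c - 1) (by linarith [div_nonneg hv hc.le]) d
  have htangent : c ^ d + (v - c) / 2 ≤ v ^ d :=
    calc c ^ d + (v - c) / 2 = c ^ d * (1 + d * (v / c - 1)) := by rw [hcd]; field_simp
      _ ≤ c ^ d * (v / c) ^ d := by gcongr
      _ = v ^ d := by rw [← mul_pow, mul_div_cancel₀ _ hc.ne']
  have hRd : Rd d = c - 2 * c ^ d := by rw [Rd_eq_mul_critPoint, hcd]; field_simp; ring
  linarith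

lemma two_mul_sq_le_three_pow (n : ℕ) : 2 * n ^ 2 ≤ 3 ^ n := by
  have hlin : ∀ n : ℕ, 2 * n + 1 ≤ 3 ^ n := fun n => by
    induction n with
    | zero => simp
    | succ n ih => rw [pow_succ]; omega
  induction n with
  | zero => simp
  | succ n ih => rw [pow_succ 3 n]; nlinarith [hlin n]

/-- Bernoulli gives `(1 − 1/d)^{d−1} ≥ 1/d`, so `3ᵈ R_d^{d−1} ≥ 3ᵈ / (2d²) ≥ 1`. -/
lemma Rd_le_three_mul_Rd_pow (hd : 2 ≤ d) : Rd d ≤ (3 * Rd d) ^ d := by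
  have hd' : (2 : ℝ) ≤ d := by exact_mod_cast hd
  have hbern : 1 / (d : ℝ) ≤ (1 - 1 / d) ^ (d - 1) := by
    have h2 : -2 ≤ -(1 / (d : ℝ)) := by
      have : 1 / (d : ℝ) ≤ 1 := by rw [div_le_one] <;> linarith
      linarith
    calc 1 / (d : ℝ) = 1 + ((d - 1 : ℕ) : ℝ) * -(1 / d) := by
          rw [Nat.cast_pred (by omega)]; field_simp; ring
      _ ≤ (1 + -(1 / d)) ^ (d - 1) := one_add_mul_le_pow h2 _
      _ = _ := by ring
  have hthree : 2 * (d : ℝ) ^ 2 ≤ 3 ^ d := by exact_mod_cast two_mul_sq_le_three_pow d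
  have hpow : 1 ≤ 3 ^ d * Rd d ^ (d - 1) := by
    rw [Rd_eq_mul_critPoint, mul_pow, critPoint_pow_pred hd]
    calc (1 : ℝ) ≤ 3 ^ d / (2 * (d : ℝ) ^ 2) := by rw [one_le_div (by positivity)]; exact hthree
      _ = 3 ^ d * (1 / d * (2 * (d : ℝ))⁻¹) := by field_simp
      _ ≤ _ := by gcongr
  calc Rd d ≤ 3 ^ d * Rd d ^ (d - 1) * Rd d := le_mul_of_one_le_left (Rd_pos hd).le hpow
    _ = (3 * Rd d) ^ d := by rw [mul_assoc, ← pow_succ, Nat.sub_add_cancel (by omega), mul_pow]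

end Constant

section Box

variable {d : ℕ}

lemma snd_Tmap_pos (hd : 2 ≤ d) (heven : Even d) {p : ℝ × ℝ} (hp : p ≠ 0)
    (h₁ : 0 ≤ (Tmap 1 d p).2) (h₂ : 0 ≤ (Tmap 1 d (Tmap 1 d p)).2) : 0 < (Tmap 1 d p).2 := by
  obtain ⟨x, y⟩ := p
  rw [snd_Tmap (Tmap 1 d _), Tmap_fst_add_snd] at h₂
  simp only [snd_Tmap, mul_one] at h₁ h₂ ⊢
  refine h₁.lt_of_ne fun h => hp ?_
  -- `y₁ = 0` forces `t = 0`, hence `y = 2t − 3y₁ = 0` and `sᵈ = t − 2y₁ = 0`.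
  have hd0 : d ≠ 0 := by omega
  have ht : 2 * y - 3 * (x + y) ^ d = 0 :=
    (pow_eq_zero_iff hd0).1 (le_antisymm (by linarith) (heven.pow_nonneg _))
  have hs : x + y = 0 := (pow_eq_zero_iff hd0).1 (by linarith)
  have hy : y = 0 := by linarith
  exact Prod.ext (show x = 0 by linarith) hy

lemma mem_box_of_snd_Tmap_nonneg (hd : 2 ≤ d) (heven : Even d) {p : ℝ × ℝ} (hp : p ≠ 0)
    (h₁ : 0 ≤ (Tmap 1 d p).2) (h₂ : 0 ≤ (Tmap 1 d (Tmap 1 d p)).2) :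
    p ∈ Ioo (-(5 * Rd d)) (Rd d) ×ˢ Ioo 0 (2 * Rd d) := by
  have hy₁ := snd_Tmap_pos hd heven hp h₁ h₂
  obtain ⟨x, y⟩ := p
  rw [snd_Tmap (Tmap 1 d _), Tmap_fst_add_snd] at h₂
  simp only [snd_Tmap, mul_one] at hy₁ h₂
  set t := 2 * y - 3 * (x + y) ^ d
  have hs := sub_two_mul_pow_le_Rd hd heven (x + y)
  have ht := sub_two_mul_pow_le_Rd hd heven t
  have hsR : (x + y) ^ d ≤ Rd d := by linarith
  have habs : |x + y| ≤ 3 * Rd d := by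
    refine (pow_le_pow_iff_left₀ (abs_nonneg _) (by linarith [Rd_pos hd]) (by omega : d ≠ 0)).1 ?_
    rw [heven.pow_abs]
    exact hsR.trans (Rd_le_three_mul_Rd_pow hd)
  have hs_lower := neg_abs_le (x + y)
  have hsd_nonneg := heven.pow_nonneg (x + y)
  exact ⟨⟨by linarith, by linarith⟩, by linarith, by linarith⟩

end Box

/-- for even `d`, the basin of the origin is contained in
`(−5R_d, R_d) × (0, 2R_d) ∪ {(0,0)}`; in particular it is bounded. -/
theorem stmt7 (d : ℕ) (hd : 2 ≤ d) (heven : Even d) :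
    basin 1 d ⊆ (Set.Ioo (-(5 * Rd d)) (Rd d) ×ˢ Set.Ioo 0 (2 * Rd d)) ∪ {((0 : ℝ), (0 : ℝ))} ∧
    Bornology.IsBounded (basin 1 d) := by
  have hbox : basin 1 d ⊆
      (Set.Ioo (-(5 * Rd d)) (Rd d) ×ˢ Set.Ioo 0 (2 * Rd d)) ∪ {((0 : ℝ), (0 : ℝ))} := by
    intro p hp
    rcases eq_or_ne p 0 with rfl | hp0
    · exact Or.inr rfl
    · exact Or.inl <| mem_box_of_snd_Tmap_nonneg hd heven hp0
        (snd_iterate_nonneg_of_mem_basin zero_le_one heven hp 1)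
        (snd_iterate_nonneg_of_mem_basin zero_le_one heven hp 2)
  exact ⟨hbox, (((Metric.isBounded_Ioo _ _).prod (Metric.isBounded_Ioo _ _)).union
    Bornology.isBounded_singleton).subset hbox⟩
end

section
/- Let d ≥ 3 be odd and T_d := T_{1,d}. For b ∈ (0, 1/2], let Q_b ⊂ ℝ² be the convex hull of the six points (2b^d, 0), (2b^d, 2b^d), (0, 2b^d), (−b^d, 0), (−b^d, −b^d), (0, −b^d). Then for every b ∈ (0, 1/2], T_d(Q_b) is contained in the topological interior of Q_b. -/
/-- The hexagon `Q_b`: convex hull of the six indicated vertices. -/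
noncomputable def Qb (d : ℕ) (b : ℝ) : Set (ℝ × ℝ) :=
  convexHull ℝ
    {((2 * b ^ d, (0 : ℝ))),
     ((2 * b ^ d, 2 * b ^ d)),
     (((0 : ℝ), 2 * b ^ d)),
     ((-b ^ d, (0 : ℝ))),
     ((-b ^ d, -b ^ d)),
     (((0 : ℝ), -b ^ d))}

/-!
Put `c = b^d ≤ 1/8`. Then `Q_b` is the hexagon `-c ≤ x, y ≤ 2c`, `y - 2x ≤ 2c`, `x - 2y ≤ 2c`,
on which `s = x + y` satisfies `|s| ≤ 4c ≤ 1/2`. Hence `s^d = w s` with `w = s^(d-1) ∈ [0, 1/4]`,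
`w ≤ 1/16` when `|s| ≤ 2c`, and `w > 0` unless `s = 0`, since `d - 1 ≥ 2` is even.
So `T_d(x, y) = (y - w s, y - 2 w s)`, and in each sign case of `s` the six inequalities hold
strictly at the image by linear arithmetic.
-/

theorem mem_convexHull_of_eq_add_smul_add_smul {R E : Type*} [Field R] [LinearOrder R]
    [IsStrictOrderedRing R] [AddCommGroup E] [Module R E] {s : Set E} {u v w p : E}
    (hu : u ∈ s) (hv : v ∈ s) (hw : w ∈ s) {a b c : R} (ha : 0 ≤ a) (hb : 0 ≤ b) (hc : 0 ≤ c)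
    (habc : a + b + c = 1) (hp : p = a • u + b • v + c • w) : p ∈ convexHull R s := by
  subst hp
  have := (convex_convexHull R s).sum_mem (t := Finset.univ) (w := ![a, b, c])
    (z := ![u, v, w]) (fun i _ => by fin_cases i <;> assumption)
    (by simpa [Fin.sum_univ_three] using habc)
    (fun i _ => by fin_cases i <;> exact subset_convexHull R s ‹_›)
  simpa [Fin.sum_univ_three] using this

theorem Even.pow_le_sq_of_abs_le {n : ℕ} (hn : Even n) (h2 : 2 ≤ n) {s r : ℝ} (hs : |s| ≤ r)
    (hr : r ≤ 1) : s ^ n ≤ r ^ 2 := by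
  rw [← hn.pow_abs]
  calc |s| ^ n ≤ r ^ n := pow_le_pow_left₀ (abs_nonneg s) hs n
    _ ≤ r ^ 2 := pow_le_pow_of_le_one ((abs_nonneg s).trans hs) hr h2

def hexagon (c : ℝ) : Set (ℝ × ℝ) :=
  {p | -c ≤ p.1 ∧ p.1 ≤ 2 * c ∧ -c ≤ p.2 ∧ p.2 ≤ 2 * c ∧
    p.2 - 2 * p.1 ≤ 2 * c ∧ p.1 - 2 * p.2 ≤ 2 * c}

def openHexagon (c : ℝ) : Set (ℝ × ℝ) :=
  {p | -c < p.1 ∧ p.1 < 2 * c ∧ -c < p.2 ∧ p.2 < 2 * c ∧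
    p.2 - 2 * p.1 < 2 * c ∧ p.1 - 2 * p.2 < 2 * c}

theorem convex_hexagon (c : ℝ) : Convex ℝ (hexagon c) := by
  rintro p ⟨hp₁, hp₂, hp₃, hp₄, hp₅, hp₆⟩ q ⟨hq₁, hq₂, hq₃, hq₄, hq₅, hq₆⟩ a b ha hb hab
  refine ⟨?_, ?_, ?_, ?_, ?_, ?_⟩ <;>
    simp only [Prod.fst_add, Prod.snd_add, Prod.smul_fst, Prod.smul_snd, smul_eq_mul] <;>
    nlinarith

theorem isOpen_openHexagon (c : ℝ) : IsOpen (openHexagon c) := by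
  simp only [openHexagon, Set.ofPred_and]
  refine (isOpen_lt ?_ ?_).inter <| (isOpen_lt ?_ ?_).inter <| (isOpen_lt ?_ ?_).inter <|
    (isOpen_lt ?_ ?_).inter <| (isOpen_lt ?_ ?_).inter (isOpen_lt ?_ ?_) <;> fun_prop

theorem openHexagon_subset_hexagon (c : ℝ) : openHexagon c ⊆ hexagon c :=
  fun _ ⟨h₁, h₂, h₃, h₄, h₅, h₆⟩ => ⟨h₁.le, h₂.le, h₃.le, h₄.le, h₅.le, h₆.le⟩

-- Fan triangulation from the vertex `(-c, -c)`; the weights are barycentric coordinates.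
theorem hexagon_subset_convexHull {c : ℝ} (hc : 0 < c) :
    hexagon c ⊆ convexHull ℝ
      {(2 * c, 0), (2 * c, 2 * c), (0, 2 * c), (-c, 0), (-c, -c), (0, -c)} := by
  rintro ⟨x, y⟩ ⟨h₁, h₂, h₃, h₄, h₅, h₆⟩
  have hc' := hc.ne'
  rcases le_total y x with hyx | hxy
  · rcases le_total (2 * c) (x - 3 * y) with hEA | hEA
    · apply mem_convexHull_of_eq_add_smul_add_smul (u := (-c, -c)) (v := (0, -c))
        (w := (2 * c, 0)) (a := (2 * c - x + 2 * y) / c) (b := (x - 3 * y - 2 * c) / c)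
        (c := (y + c) / c) (by simp) (by simp) (by simp)
        (div_nonneg (by linarith) hc.le) (div_nonneg (by linarith) hc.le)
        (div_nonneg (by linarith) hc.le) (by field_simp; ring)
        (by ext <;> simp <;> field_simp <;> ring)
    · apply mem_convexHull_of_eq_add_smul_add_smul (u := (-c, -c)) (v := (2 * c, 0))
        (w := (2 * c, 2 * c)) (a := (2 * c - x) / (3 * c)) (b := (x - y) / (2 * c))
        (c := (2 * c - x + 3 * y) / (6 * c)) (by simp) (by simp) (by simp)
        (div_nonneg (by linarith) (by linarith)) (div_nonneg (by linarith) (by linarith))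
        (div_nonneg (by linarith) (by linarith)) (by field_simp; ring)
        (by ext <;> simp <;> field_simp <;> ring)
  · rcases le_total (2 * c) (y - 3 * x) with hEC | hEC
    · apply mem_convexHull_of_eq_add_smul_add_smul (u := (-c, -c)) (v := (-c, 0))
        (w := (0, 2 * c)) (a := (2 * c - y + 2 * x) / c) (b := (y - 3 * x - 2 * c) / c)
        (c := (x + c) / c) (by simp) (by simp) (by simp)
        (div_nonneg (by linarith) hc.le) (div_nonneg (by linarith) hc.le)
        (div_nonneg (by linarith) hc.le) (by field_simp; ring)
        (by ext <;> simp <;> field_simp <;> ring)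
    · apply mem_convexHull_of_eq_add_smul_add_smul (u := (-c, -c)) (v := (0, 2 * c))
        (w := (2 * c, 2 * c)) (a := (2 * c - y) / (3 * c)) (b := (y - x) / (2 * c))
        (c := (2 * c - y + 3 * x) / (6 * c)) (by simp) (by simp) (by simp)
        (div_nonneg (by linarith) (by linarith)) (div_nonneg (by linarith) (by linarith))
        (div_nonneg (by linarith) (by linarith)) (by field_simp; ring)
        (by ext <;> simp <;> field_simp <;> ring)

theorem Qb_eq_hexagon (d : ℕ) {b : ℝ} (hb : 0 < b) : Qb d b = hexagon (b ^ d) := by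
  refine subset_antisymm (convexHull_min ?_ (convex_hexagon _))
    (hexagon_subset_convexHull (pow_pos hb d))
  have hc := (pow_pos hb d).le
  rintro v (rfl | rfl | rfl | rfl | rfl | rfl) <;>
    refine ⟨?_, ?_, ?_, ?_, ?_, ?_⟩ <;> (dsimp only; linarith)

theorem mem_openHexagon_of_mem_hexagon {c x y w : ℝ} (hc : 0 < c) (hp : (x, y) ∈ hexagon c)
    (hw_pos : x + y ≠ 0 → 0 < w) (hw₄ : w ≤ 1 / 4) (hw₁₆ : x + y ≤ 2 * c → w ≤ 1 / 16) :
    (y - w * (x + y), y - 2 * (w * (x + y))) ∈ openHexagon c := by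
  obtain ⟨h₁, h₂, h₃, h₄, h₅, h₆⟩ := hp
  rcases lt_trichotomy (x + y) 0 with hs | hs | hs
  · have hu : 1 / 4 * (x + y) ≤ w * (x + y) := mul_le_mul_of_nonpos_right hw₄ hs.le
    have hu' : w * (x + y) < 0 := mul_neg_of_pos_of_neg (hw_pos hs.ne) hs
    exact ⟨by linarith, by linarith, by linarith, by linarith, by linarith, by linarith⟩
  · simp only [hs, mul_zero]
    exact ⟨by linarith, by linarith, by linarith, by linarith, by linarith, by linarith⟩
  · have hu : w * (x + y) ≤ 1 / 4 * (x + y) := mul_le_mul_of_nonneg_right hw₄ hs.le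
    have hu' : 0 < w * (x + y) := mul_pos (hw_pos hs.ne') hs
    refine ⟨by linarith, by linarith, ?_, by linarith, by linarith, by linarith⟩
    rcases le_or_gt (x + y) (2 * c) with hs₂ | hs₂
    · have hu₁₆ : w * (x + y) ≤ 1 / 16 * (x + y) := mul_le_mul_of_nonneg_right (hw₁₆ hs₂) hs.le
      linarith
    · linarith

theorem Tmap_mem_openHexagon {d : ℕ} (hd : 3 ≤ d) (hodd : Odd d) {c : ℝ} (hc₀ : 0 < c)
    (hc : c ≤ 1 / 8) {p : ℝ × ℝ} (hp : p ∈ hexagon c) : Tmap 1 d p ∈ openHexagon c := by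
  obtain ⟨x, y⟩ := p
  have heven : Even (d - 1) := Nat.Odd.sub_odd hodd odd_one
  have hpow : (x + y) ^ d = (x + y) ^ (d - 1) * (x + y) := by
    rw [← pow_succ, Nat.sub_add_cancel (by omega)]
  have ⟨h₁, h₂, h₃, h₄, _⟩ := hp
  have hs : |x + y| ≤ 4 * c := abs_le.2 ⟨by linarith, by linarith⟩
  have hw₄ : (x + y) ^ (d - 1) ≤ 1 / 4 := by
    nlinarith [heven.pow_le_sq_of_abs_le (by omega) hs (by linarith)]
  have hw₁₆ : x + y ≤ 2 * c → (x + y) ^ (d - 1) ≤ 1 / 16 := fun hs₂ => by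
    have hs' : |x + y| ≤ 2 * c := abs_le.2 ⟨by linarith, hs₂⟩
    nlinarith [heven.pow_le_sq_of_abs_le (by omega) hs' (by linarith)]
  simpa [Tmap, hpow, mul_assoc] using
    mem_openHexagon_of_mem_hexagon hc₀ hp (heven.pow_pos ·) hw₄ hw₁₆

/-- for odd `d ≥ 3` and every `b ∈ (0, 1/2]`, the image
`T_d(Q_b)` is contained in the interior of `Q_b`. -/
theorem stmt11 (d : ℕ) (hd : 3 ≤ d) (hodd : Odd d) :
    ∀ b ∈ Set.Ioc (0 : ℝ) (1 / 2),
      Tmap 1 d '' Qb d b ⊆ interior (Qb d b) := by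
  rintro b ⟨hb₀, hb₂⟩
  have hc : b ^ d ≤ 1 / 8 :=
    calc b ^ d ≤ (1 / 2) ^ d := pow_le_pow_left₀ hb₀.le hb₂ d
      _ ≤ (1 / 2) ^ 3 := pow_le_pow_of_le_one (by norm_num) (by norm_num) hd
      _ = 1 / 8 := by norm_num
  rw [Qb_eq_hexagon d hb₀]
  rintro _ ⟨p, hp, rfl⟩
  exact interior_maximal (openHexagon_subset_hexagon _) (isOpen_openHexagon _)
    (Tmap_mem_openHexagon hd hodd (pow_pos hb₀ d) hc hp)
end

section
/- Let d ≥ 3 be odd and T_d := T_{1,d}. Then the points p₀ = (0,1) and p₁ = (0,−1) form a two-cycle of T_d, i.e. T_d(p₀) = p₁ and T_d(p₁) = p₀. The derivative of T_d² at p₀ (and also at p₁) equals the matrix M = [[3d² − 2d, 3d² − 4d + 1], [6d² − 2d, 6d² − 6d + 1]], and the eigenvalues of M are λ± = (9d² − 8d + 1 ± (3d−1)·√(9d² − 10d + 1))/2, which satisfy 1/9 < λ⁻ < 1 < λ⁺; hence the two-cycle {p₀, p₁} is a hyperbolic saddle. -/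
/-- The matrix `M = DT_d²(p₀) = [[3d²−2d, 3d²−4d+1],[6d²−2d, 6d²−6d+1]]`. -/
noncomputable def Mmat (d : ℕ) : Matrix (Fin 2) (Fin 2) ℝ :=
  !![3 * (d : ℝ) ^ 2 - 2 * d, 3 * (d : ℝ) ^ 2 - 4 * d + 1;
     6 * (d : ℝ) ^ 2 - 2 * d, 6 * (d : ℝ) ^ 2 - 6 * d + 1]

/-- The continuous linear map on `ℝ²` with matrix `Mmat d`. -/
noncomputable def Dcycle (d : ℕ) : ℝ × ℝ →L[ℝ] ℝ × ℝ :=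
  ((3 * (d : ℝ) ^ 2 - 2 * d) • ContinuousLinearMap.fst ℝ ℝ ℝ +
    (3 * (d : ℝ) ^ 2 - 4 * d + 1) • ContinuousLinearMap.snd ℝ ℝ ℝ).prod
  ((6 * (d : ℝ) ^ 2 - 2 * d) • ContinuousLinearMap.fst ℝ ℝ ℝ +
    (6 * (d : ℝ) ^ 2 - 6 * d + 1) • ContinuousLinearMap.snd ℝ ℝ ℝ)

/-- `λ⁻` and `λ⁺`, the eigenvalues of `Mmat d`. -/
noncomputable def lamMinus (d : ℕ) : ℝ :=
  (9 * (d : ℝ) ^ 2 - 8 * d + 1 - (3 * d - 1) * Real.sqrt (9 * (d : ℝ) ^ 2 - 10 * d + 1)) / 2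

noncomputable def lamPlus (d : ℕ) : ℝ :=
  (9 * (d : ℝ) ^ 2 - 8 * d + 1 + (3 * d - 1) * Real.sqrt (9 * (d : ℝ) ^ 2 - 10 * d + 1)) / 2

open ContinuousLinearMap

theorem Matrix.hasEigenvalue_toLin'_fin_two_iff {R : Type*} [CommRing R] [IsDomain R]
    (A : Matrix (Fin 2) (Fin 2) R) (μ : R) :
    Module.End.HasEigenvalue (Matrix.toLin' A) μ ↔ μ ^ 2 - A.trace * μ + A.det = 0 := by
  rw [Module.End.hasEigenvalue_iff_isRoot_charpoly, Matrix.charpoly_toLin',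
    Matrix.charpoly_fin_two]
  simp

/-- The derivative of `Tmap a d` at `(x, y)` is `tmapDeriv c` with `c = a d (x + y)^(d-1)`. -/
noncomputable def tmapDeriv (c : ℝ) : ℝ × ℝ →L[ℝ] ℝ × ℝ :=
  (snd ℝ ℝ ℝ - c • (fst ℝ ℝ ℝ + snd ℝ ℝ ℝ)).prod
    (snd ℝ ℝ ℝ - (2 * c) • (fst ℝ ℝ ℝ + snd ℝ ℝ ℝ))

theorem hasFDerivAt_Tmap (a : ℝ) (d : ℕ) (p : ℝ × ℝ) :
    HasFDerivAt (Tmap a d) (tmapDeriv (a * d * (p.1 + p.2) ^ (d - 1))) p := by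
  have hpow : HasFDerivAt (fun q : ℝ × ℝ => (q.1 + q.2) ^ d)
      ((d * (p.1 + p.2) ^ (d - 1)) • (fst ℝ ℝ ℝ + snd ℝ ℝ ℝ)) p :=
    (hasDerivAt_pow d _).comp_hasFDerivAt p (hasFDerivAt_fst.add hasFDerivAt_snd)
  refine ((hasFDerivAt_snd.sub (hpow.const_mul a)).prodMk
    (hasFDerivAt_snd.sub (hpow.const_mul (2 * a)))).congr_fderiv ?_
  simp only [tmapDeriv, smul_smul, mul_assoc]

theorem tmapDeriv_comp_self (d : ℕ) : (tmapDeriv d).comp (tmapDeriv d) = Dcycle d := by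
  ext <;> simp [tmapDeriv, Dcycle] <;> ring

theorem Tmap_one_zero_one (d : ℕ) : Tmap 1 d (0, 1) = (0, -1) := by
  norm_num [Tmap]

theorem Tmap_one_zero_neg_one {d : ℕ} (hd : Odd d) : Tmap 1 d (0, -1) = (0, 1) := by
  norm_num [Tmap, hd.neg_one_pow]

theorem Mmat_trace (d : ℕ) : (Mmat d).trace = 9 * (d : ℝ) ^ 2 - 8 * d + 1 := by
  rw [Mmat, Matrix.trace_fin_two_of]
  ring

theorem Mmat_det (d : ℕ) : (Mmat d).det = (d : ℝ) ^ 2 := by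
  rw [Mmat, Matrix.det_fin_two_of]
  ring

theorem sq_sqrt_disc (d : ℕ) :
    Real.sqrt (9 * (d : ℝ) ^ 2 - 10 * d + 1) ^ 2 = 9 * (d : ℝ) ^ 2 - 10 * d + 1 := by
  refine Real.sq_sqrt ?_
  rcases Nat.eq_zero_or_pos d with rfl | hd
  · norm_num
  · have hd' : (1 : ℝ) ≤ d := by exact_mod_cast hd
    nlinarith

theorem sub_lamMinus_mul_sub_lamPlus (d : ℕ) (x : ℝ) :
    (x - lamMinus d) * (x - lamPlus d) = x ^ 2 - (9 * (d : ℝ) ^ 2 - 8 * d + 1) * x + (d : ℝ) ^ 2 := by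
  rw [lamMinus, lamPlus]
  linear_combination (-(3 * (d : ℝ) - 1) ^ 2 / 4) * sq_sqrt_disc d

theorem Mmat_hasEigenvalue_iff (d : ℕ) (μ : ℝ) :
    Module.End.HasEigenvalue (Matrix.toLin' (Mmat d)) μ ↔ μ = lamMinus d ∨ μ = lamPlus d := by
  rw [Matrix.hasEigenvalue_toLin'_fin_two_iff, Mmat_trace, Mmat_det,
    ← sub_lamMinus_mul_sub_lamPlus, mul_eq_zero, sub_eq_zero, sub_eq_zero]

theorem lamMinus_le_lamPlus {d : ℕ} (hd : 1 ≤ d) : lamMinus d ≤ lamPlus d := by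
  have hd' : (1 : ℝ) ≤ d := by exact_mod_cast hd
  have := mul_nonneg (by linarith : (0 : ℝ) ≤ 3 * d - 1)
    (Real.sqrt_nonneg (9 * (d : ℝ) ^ 2 - 10 * d + 1))
  rw [lamMinus, lamPlus]
  linarith

theorem lamMinus_lt_one_and_one_lt_lamPlus {d : ℕ} (hd : 2 ≤ d) :
    lamMinus d < 1 ∧ 1 < lamPlus d := by
  have hd' : (2 : ℝ) ≤ d := by exact_mod_cast hd
  have hneg : (1 - lamMinus d) * (1 - lamPlus d) < 0 := by
    rw [sub_lamMinus_mul_sub_lamPlus]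
    nlinarith
  have hle := lamMinus_le_lamPlus (d := d) (by omega)
  rcases mul_neg_iff.mp hneg with ⟨h₁, h₂⟩ | ⟨h₁, h₂⟩
  · exact ⟨by linarith, by linarith⟩
  · linarith

theorem one_ninth_lt_lamMinus {d : ℕ} (hd : 2 ≤ d) : 1 / 9 < lamMinus d := by
  have hd' : (2 : ℝ) ≤ d := by exact_mod_cast hd
  have hpos : 0 < (1 / 9 - lamMinus d) * (1 / 9 - lamPlus d) := by
    rw [sub_lamMinus_mul_sub_lamPlus]
    nlinarith
  have hplus := (lamMinus_lt_one_and_one_lt_lamPlus hd).2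
  rcases pos_and_pos_or_neg_and_neg_of_mul_pos hpos with ⟨_, h₂⟩ | ⟨h₁, _⟩
  · linarith
  · linarith

/-- `{(0,1),(0,−1)}` is a two-cycle of `T_d`, the derivative of
`T_d²` at each of its points is the matrix `M`, whose eigenvalues `λ±` satisfy
`1/9 < λ⁻ < 1 < λ⁺` (a hyperbolic saddle). -/
theorem stmt12 (d : ℕ) (hd : 3 ≤ d) (hodd : Odd d) :
    Tmap 1 d (0, 1) = (0, -1) ∧
    Tmap 1 d (0, -1) = (0, 1) ∧
    HasFDerivAt (Tmap 1 d ∘ Tmap 1 d) (Dcycle d) (0, 1) ∧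
    HasFDerivAt (Tmap 1 d ∘ Tmap 1 d) (Dcycle d) (0, -1) ∧
    Module.End.HasEigenvalue (Matrix.toLin' (Mmat d)) (lamMinus d) ∧
    Module.End.HasEigenvalue (Matrix.toLin' (Mmat d)) (lamPlus d) ∧
    1 / 9 < lamMinus d ∧ lamMinus d < 1 ∧ 1 < lamPlus d := by
  have hT₀ := Tmap_one_zero_one d
  have hT₁ := Tmap_one_zero_neg_one hodd
  have hD₀ : HasFDerivAt (Tmap 1 d) (tmapDeriv d) (0, 1) := by
    simpa using hasFDerivAt_Tmap 1 d (0, 1)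
  have hD₁ : HasFDerivAt (Tmap 1 d) (tmapDeriv d) (0, -1) := by
    simpa [(Nat.Odd.sub_odd hodd odd_one).neg_one_pow] using hasFDerivAt_Tmap 1 d (0, -1)
  rw [← tmapDeriv_comp_self]
  exact ⟨hT₀, hT₁, (hT₀ ▸ hD₁).comp _ hD₀, (hT₁ ▸ hD₀).comp _ hD₁,
    (Mmat_hasEigenvalue_iff d _).2 (.inl rfl), (Mmat_hasEigenvalue_iff d _).2 (.inr rfl),
    one_ninth_lt_lamMinus (by omega), lamMinus_lt_one_and_one_lt_lamPlus (by omega)⟩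
end
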